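/- arXiv:1810.10397 — 3 statements merged into one kernel-verified Lean document; each statement's English description precedes it below -/
import Mathlib

section
/- Let F be a field of characteristic ≠ 2. Let A1 = [[0,0,0,1],[0,0,1,0],[0,-1,0,0],[-1,0,0,0]], B1 = [[0,1,0,1],[-1,0,0,0],[0,0,0,0],[-1,0,0,0]], and A2 = B2 = 0 (4×4 skew-symmetric). Then σ2(A1) = σ2(B1), but det(A1) ≠ det(B1). -/
/-!
A 4×4 alternating matrix with upper entries `a, b, c, d, e, f` has
`σ₂ = a² + b² + c² + d² + e² + f²` and `det = (a f - b e + c d)²`, the square of its Pfaffian.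
For `A1` and `B1` the squared entries sum to `2` in both cases, while the Pfaffians are `1` and `0`.
-/

/-- Sum of the principal 2×2 minors of a 4×4 matrix. -/
def sigma2 {R : Type*} [CommRing R] (A : Matrix (Fin 4) (Fin 4) R) : R :=
  (A 0 0 * A 1 1 - A 0 1 * A 1 0) + (A 0 0 * A 2 2 - A 0 2 * A 2 0) +
    (A 0 0 * A 3 3 - A 0 3 * A 3 0) + (A 1 1 * A 2 2 - A 1 2 * A 2 1) +
    (A 1 1 * A 3 3 - A 1 3 * A 3 1) + (A 2 2 * A 3 3 - A 2 3 * A 3 2)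

section Alternating4

variable {R : Type*} [CommRing R]

def alternating4 (a b c d e f : R) : Matrix (Fin 4) (Fin 4) R :=
  !![0, a, b, c; -a, 0, d, e; -b, -d, 0, f; -c, -e, -f, 0]

theorem sigma2_alternating4 (a b c d e f : R) :
    sigma2 (alternating4 a b c d e f) = a ^ 2 + b ^ 2 + c ^ 2 + d ^ 2 + e ^ 2 + f ^ 2 := by
  simp only [sigma2, alternating4, Matrix.of_apply, Matrix.cons_val', Matrix.cons_val_zero,
    Matrix.cons_val_one, Matrix.cons_val, Matrix.empty_val', Matrix.cons_val_fin_one]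
  ring

theorem det_alternating4 (a b c d e f : R) :
    (alternating4 a b c d e f).det = (a * f - b * e + c * d) ^ 2 := by
  simp only [alternating4, Matrix.det_succ_row_zero, Matrix.submatrix_apply,
    Matrix.submatrix_submatrix, Function.comp_apply, Matrix.det_unique, Fin.default_eq_zero,
    Finset.univ_unique, Finset.sum_singleton, Fin.sum_univ_succ, Fin.succAbove, Fin.val_succ,
    Fin.val_eq_zero, Fin.coe_ofNat_eq_mod, Matrix.of_apply, Matrix.cons_val, ↓reduceIte,
    Fin.lt_one_iff, Fin.reduceSucc, Fin.reduceCastSucc, Fin.reduceLT, Fin.reduceEq]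
  ring

end Alternating4

theorem stmt_8_general (F : Type*) [Field F]
    (A1 B1 : Matrix (Fin 4) (Fin 4) F)
    (hA1 : A1 = !![0, 0, 0, 1; 0, 0, 1, 0; 0, -1, 0, 0; -1, 0, 0, 0])
    (hB1 : B1 = !![0, 1, 0, 1; -1, 0, 0, 0; 0, 0, 0, 0; -1, 0, 0, 0]) :
    sigma2 A1 = sigma2 B1 ∧ A1.det ≠ B1.det := by
  have hA : A1 = alternating4 0 0 1 1 0 0 := by simp [hA1, alternating4]
  have hB : B1 = alternating4 1 0 1 0 0 0 := by simp [hB1, alternating4]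
  rw [hA, hB, sigma2_alternating4, sigma2_alternating4, det_alternating4, det_alternating4]
  norm_num

theorem stmt_8 (F : Type*) [Field F] (hchar : ringChar F ≠ 2)
    (A1 B1 A2 B2 : Matrix (Fin 4) (Fin 4) F)
    (hA1 : A1 = !![0, 0, 0, 1; 0, 0, 1, 0; 0, -1, 0, 0; -1, 0, 0, 0])
    (hB1 : B1 = !![0, 1, 0, 1; -1, 0, 0, 0; 0, 0, 0, 0; -1, 0, 0, 0])
    (hA2 : A2 = 0) (hB2 : B2 = 0) :
    sigma2 A1 = sigma2 B1 ∧ A1.det ≠ B1.det :=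
  stmt_8_general F A1 B1 hA1 hB1
end

section
/- Let F be a field of characteristic ≠ 2. Set A1 = [[0,1,0,0],[-1,0,0,0],[0,0,0,-1],[0,0,1,0]], B1 = [[0,-1,0,0],[1,0,0,0],[0,0,0,-1],[0,0,1,0]], and A2 = B2 = [[0,0,1,0],[0,0,0,1],[-1,0,0,0],[0,-1,0,0]]. Then (A1,A2) and (B1,B2) agree on σ2(Zi), det(Zi) (i=1,2), tr(Z1Z2), tr(Z1²Z2²), tr(Z1³Z2), tr(Z1Z2³), but σ2(A1A2) ≠ σ2(B1B2). -/
open Matrix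

section TraceWords

variable {n R : Type*} [Fintype n] [DecidableEq n] [CommRing R]

theorem trace_pow_three_mul_of_sq_eq_neg_one {A : Matrix n n R} (B : Matrix n n R)
    (hA : A ^ 2 = -1) : (A ^ 3 * B).trace = -(A * B).trace := by
  rw [pow_succ, hA, neg_one_mul, neg_mul, trace_neg]

theorem trace_mul_pow_three_of_sq_eq_neg_one (A : Matrix n n R) {B : Matrix n n R}
    (hB : B ^ 2 = -1) : (A * B ^ 3).trace = -(A * B).trace := by
  rw [pow_succ', hB, mul_neg_one, mul_neg, trace_neg]

theorem trace_words_eq_of_sq_eq_neg_one {A₁ A₂ B₁ B₂ : Matrix n n R}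
    (hA₁ : A₁ ^ 2 = -1) (hA₂ : A₂ ^ 2 = -1) (hB₁ : B₁ ^ 2 = -1) (hB₂ : B₂ ^ 2 = -1)
    (h : (A₁ * A₂).trace = (B₁ * B₂).trace) :
    (A₁ ^ 2 * A₂ ^ 2).trace = (B₁ ^ 2 * B₂ ^ 2).trace ∧
    (A₁ ^ 3 * A₂).trace = (B₁ ^ 3 * B₂).trace ∧
    (A₁ * A₂ ^ 3).trace = (B₁ * B₂ ^ 3).trace := by
  refine ⟨by rw [hA₁, hA₂, hB₁, hB₂], ?_, ?_⟩
  · rw [trace_pow_three_mul_of_sq_eq_neg_one _ hA₁, trace_pow_three_mul_of_sq_eq_neg_one _ hB₁, h]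
  · rw [trace_mul_pow_three_of_sq_eq_neg_one _ hA₂, trace_mul_pow_three_of_sq_eq_neg_one _ hB₂, h]

end TraceWords

section Example

variable (R : Type*) [CommRing R]

def skewA : Matrix (Fin 4) (Fin 4) R := !![0, 1, 0, 0; -1, 0, 0, 0; 0, 0, 0, -1; 0, 0, 1, 0]

def skewB : Matrix (Fin 4) (Fin 4) R := !![0, -1, 0, 0; 1, 0, 0, 0; 0, 0, 0, -1; 0, 0, 1, 0]

def skewC : Matrix (Fin 4) (Fin 4) R := !![0, 0, 1, 0; 0, 0, 0, 1; -1, 0, 0, 0; 0, -1, 0, 0]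

theorem skewA_sq : skewA R ^ 2 = -1 := by
  ext i j; fin_cases i <;> fin_cases j <;> simp [sq, mul_apply, Fin.sum_univ_four, skewA]

theorem skewB_sq : skewB R ^ 2 = -1 := by
  ext i j; fin_cases i <;> fin_cases j <;> simp [sq, mul_apply, Fin.sum_univ_four, skewB]

theorem skewC_sq : skewC R ^ 2 = -1 := by
  ext i j; fin_cases i <;> fin_cases j <;> simp [sq, mul_apply, Fin.sum_univ_four, skewC]

theorem skewA_mul_skewC :
    skewA R * skewC R = !![0, 0, 0, 1; 0, 0, -1, 0; 0, 1, 0, 0; -1, 0, 0, 0] := by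
  ext i j; fin_cases i <;> fin_cases j <;> simp [mul_apply, Fin.sum_univ_four, skewA, skewC]

theorem skewB_mul_skewC :
    skewB R * skewC R = !![0, 0, 0, -1; 0, 0, 1, 0; 0, 1, 0, 0; -1, 0, 0, 0] := by
  ext i j; fin_cases i <;> fin_cases j <;> simp [mul_apply, Fin.sum_univ_four, skewB, skewC]

theorem trace_skewA_mul_skewC : (skewA R * skewC R).trace = 0 := by
  simp [skewA_mul_skewC, trace, Fin.sum_univ_four]

theorem trace_skewB_mul_skewC : (skewB R * skewC R).trace = 0 := by
  simp [skewB_mul_skewC, trace, Fin.sum_univ_four]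

theorem sigma2_skewA : sigma2 (skewA R) = 2 := by
  simp [sigma2, skewA]; norm_num

theorem sigma2_skewB : sigma2 (skewB R) = 2 := by
  simp [sigma2, skewB]; norm_num

theorem det_skewA : (skewA R).det = 1 := by
  simp [det_succ_row_zero, Fin.sum_univ_succ, skewA, Fin.succAbove]

theorem det_skewB : (skewB R).det = 1 := by
  simp [det_succ_row_zero, Fin.sum_univ_succ, skewB, Fin.succAbove]

theorem sigma2_skewA_mul_skewC : sigma2 (skewA R * skewC R) = 2 := by
  simp [skewA_mul_skewC, sigma2]; norm_num

theorem sigma2_skewB_mul_skewC : sigma2 (skewB R * skewC R) = -2 := by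
  simp [skewB_mul_skewC, sigma2]; norm_num

end Example

theorem two_ne_neg_two_of_ringChar_ne_two {R : Type*} [Ring R] [Nontrivial R] [NoZeroDivisors R]
    (hchar : ringChar R ≠ 2) : (2 : R) ≠ -2 := by
  have h2 : (2 : R) ≠ 0 := Ring.two_ne_zero hchar
  rw [Ne, eq_neg_iff_add_eq_zero, ← two_mul]
  exact mul_ne_zero h2 h2

theorem stmt_9 (F : Type*) [Field F] (hchar : ringChar F ≠ 2)
    (A1 A2 B1 B2 : Matrix (Fin 4) (Fin 4) F)
    (hA1 : A1 = !![0, 1, 0, 0; -1, 0, 0, 0; 0, 0, 0, -1; 0, 0, 1, 0])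
    (hB1 : B1 = !![0, -1, 0, 0; 1, 0, 0, 0; 0, 0, 0, -1; 0, 0, 1, 0])
    (hA2 : A2 = !![0, 0, 1, 0; 0, 0, 0, 1; -1, 0, 0, 0; 0, -1, 0, 0])
    (hB2 : B2 = !![0, 0, 1, 0; 0, 0, 0, 1; -1, 0, 0, 0; 0, -1, 0, 0]) :
    sigma2 A1 = sigma2 B1 ∧ sigma2 A2 = sigma2 B2 ∧
    A1.det = B1.det ∧ A2.det = B2.det ∧
    (A1 * A2).trace = (B1 * B2).trace ∧
    (A1 ^ 2 * A2 ^ 2).trace = (B1 ^ 2 * B2 ^ 2).trace ∧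
    (A1 ^ 3 * A2).trace = (B1 ^ 3 * B2).trace ∧
    (A1 * A2 ^ 3).trace = (B1 * B2 ^ 3).trace ∧
    sigma2 (A1 * A2) ≠ sigma2 (B1 * B2) := by
  obtain rfl : A1 = skewA F := hA1
  obtain rfl : B1 = skewB F := hB1
  obtain rfl : A2 = skewC F := hA2
  obtain rfl : B2 = skewC F := hB2
  have htrace : (skewA F * skewC F).trace = (skewB F * skewC F).trace := by
    rw [trace_skewA_mul_skewC, trace_skewB_mul_skewC]
  obtain ⟨hsq, hcube_left, hcube_right⟩ := trace_words_eq_of_sq_eq_neg_one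
    (skewA_sq F) (skewC_sq F) (skewB_sq F) (skewC_sq F) htrace
  refine ⟨by rw [sigma2_skewA, sigma2_skewB], rfl, by rw [det_skewA, det_skewB], rfl, htrace,
    hsq, hcube_left, hcube_right, ?_⟩
  rw [sigma2_skewA_mul_skewC, sigma2_skewB_mul_skewC]
  exact two_ne_neg_two_of_ringChar_ne_two hchar
end

section
/- Let F be a field of characteristic ≠ 2. Set A1 = B1 = [[0,0,1,1],[0,0,1,1],[-1,-1,0,0],[-1,-1,0,0]], A2 = [[0,1,0,1],[-1,0,0,-1],[0,0,0,1],[-1,1,-1,0]], B2 = [[0,1,0,-1],[-1,0,0,1],[0,0,0,1],[1,-1,-1,0]]. Then (A1,A2) and (B1,B2) agree on σ2(Zi), det(Zi) (i=1,2), tr(Z1Z2), σ2(Z1Z2), tr(Z1²Z2²), tr(Z1³Z2), but tr(A1A2³) ≠ tr(B1B2³). -/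
theorem Matrix.trace_fin_four {R : Type*} [AddCommMonoid R] (A : Matrix (Fin 4) (Fin 4) R) :
    A.trace = A 0 0 + A 1 1 + A 2 2 + A 3 3 := by
  simp [Matrix.trace, Fin.sum_univ_four]

theorem neg_four_ne_four_of_ringChar_ne_two {R : Type*} [Ring R] [Nontrivial R] [NoZeroDivisors R]
    (hR : ringChar R ≠ 2) : (-4 : R) ≠ 4 := by
  have h2 := Ring.two_ne_zero hR
  have h4 : (4 : R) ≠ 0 := by
    rw [show (4 : R) = 2 * 2 by norm_num]
    exact mul_ne_zero h2 h2
  exact (Ring.eq_self_iff_eq_zero_of_char_ne_two hR).not.mpr h4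

namespace SkewPair

variable (R : Type*) [CommRing R]

def A₁ : Matrix (Fin 4) (Fin 4) R := !![0, 0, 1, 1; 0, 0, 1, 1; -1, -1, 0, 0; -1, -1, 0, 0]

def A₂ : Matrix (Fin 4) (Fin 4) R := !![0, 1, 0, 1; -1, 0, 0, -1; 0, 0, 0, 1; -1, 1, -1, 0]

def B₂ : Matrix (Fin 4) (Fin 4) R := !![0, 1, 0, -1; -1, 0, 0, 1; 0, 0, 0, 1; 1, -1, -1, 0]

theorem sigma2_A₂ : sigma2 (A₂ R) = 4 := by
  simp [A₂, sigma2]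
  ring

theorem sigma2_B₂ : sigma2 (B₂ R) = 4 := by
  simp [B₂, sigma2]
  ring

theorem det_A₂ : (A₂ R).det = 1 := by
  simp +decide [A₂, Matrix.det_succ_row_zero, Fin.sum_univ_succ, Fin.succAbove]

theorem det_B₂ : (B₂ R).det = 1 := by
  simp +decide [B₂, Matrix.det_succ_row_zero, Fin.sum_univ_succ, Fin.succAbove]

theorem trace_A₁_mul_A₂ : (A₁ R * A₂ R).trace = 0 := by
  simp [A₁, A₂, Matrix.trace_fin_four]

theorem trace_A₁_mul_B₂ : (A₁ R * B₂ R).trace = 0 := by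
  simp [A₁, B₂, Matrix.trace_fin_four]

theorem sigma2_A₁_mul_A₂ : sigma2 (A₁ R * A₂ R) = 0 := by
  simp [A₁, A₂, sigma2]

theorem sigma2_A₁_mul_B₂ : sigma2 (A₁ R * B₂ R) = 0 := by
  simp [A₁, B₂, sigma2]

theorem trace_A₁_sq_mul_A₂_sq : (A₁ R ^ 2 * A₂ R ^ 2).trace = 12 := by
  simp [A₁, A₂, sq, Matrix.trace_fin_four]
  ring

theorem trace_A₁_sq_mul_B₂_sq : (A₁ R ^ 2 * B₂ R ^ 2).trace = 12 := by
  simp [A₁, B₂, sq, Matrix.trace_fin_four]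
  ring

theorem trace_A₁_pow_three_mul_A₂ : (A₁ R ^ 3 * A₂ R).trace = 0 := by
  simp [A₁, A₂, pow_three, Matrix.trace_fin_four]
  ring

theorem trace_A₁_pow_three_mul_B₂ : (A₁ R ^ 3 * B₂ R).trace = 0 := by
  simp [A₁, B₂, pow_three, Matrix.trace_fin_four]
  ring

theorem trace_A₁_mul_A₂_pow_three : (A₁ R * A₂ R ^ 3).trace = -4 := by
  simp [A₁, A₂, pow_three, Matrix.trace_fin_four]
  ring

theorem trace_A₁_mul_B₂_pow_three : (A₁ R * B₂ R ^ 3).trace = 4 := by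
  simp [A₁, B₂, pow_three, Matrix.trace_fin_four]
  ring

end SkewPair

open SkewPair

theorem stmt_11 (F : Type*) [Field F] (hchar : ringChar F ≠ 2)
    (A1 A2 B1 B2 : Matrix (Fin 4) (Fin 4) F)
    (hA1 : A1 = !![0, 0, 1, 1; 0, 0, 1, 1; -1, -1, 0, 0; -1, -1, 0, 0])
    (hB1 : B1 = !![0, 0, 1, 1; 0, 0, 1, 1; -1, -1, 0, 0; -1, -1, 0, 0])
    (hA2 : A2 = !![0, 1, 0, 1; -1, 0, 0, -1; 0, 0, 0, 1; -1, 1, -1, 0])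
    (hB2 : B2 = !![0, 1, 0, -1; -1, 0, 0, 1; 0, 0, 0, 1; 1, -1, -1, 0]) :
    sigma2 A1 = sigma2 B1 ∧ sigma2 A2 = sigma2 B2 ∧
    A1.det = B1.det ∧ A2.det = B2.det ∧
    (A1 * A2).trace = (B1 * B2).trace ∧
    sigma2 (A1 * A2) = sigma2 (B1 * B2) ∧
    (A1 ^ 2 * A2 ^ 2).trace = (B1 ^ 2 * B2 ^ 2).trace ∧
    (A1 ^ 3 * A2).trace = (B1 ^ 3 * B2).trace ∧
    (A1 * A2 ^ 3).trace ≠ (B1 * B2 ^ 3).trace := by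
  obtain rfl : A1 = A₁ F := hA1
  obtain rfl : B1 = A₁ F := hB1
  obtain rfl : A2 = A₂ F := hA2
  obtain rfl : B2 = B₂ F := hB2
  refine ⟨rfl, ?_, rfl, ?_, ?_, ?_, ?_, ?_, ?_⟩
  · rw [sigma2_A₂, sigma2_B₂]
  · rw [det_A₂, det_B₂]
  · rw [trace_A₁_mul_A₂, trace_A₁_mul_B₂]
  · rw [sigma2_A₁_mul_A₂, sigma2_A₁_mul_B₂]
  · rw [trace_A₁_sq_mul_A₂_sq, trace_A₁_sq_mul_B₂_sq]
  · rw [trace_A₁_pow_three_mul_A₂, trace_A₁_pow_three_mul_B₂]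
  · rw [trace_A₁_mul_A₂_pow_three, trace_A₁_mul_B₂_pow_three]
    exact neg_four_ne_four_of_ringChar_ne_two hchar
end
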